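/- arXiv:1511.05435 — 7 statements merged into one kernel-verified Lean document; each statement's English description precedes it below -/
import Mathlib

section
/- Let h : [0,∞) → ℝ be the function defined by h(x) = H_{⌊x⌋} + (x − ⌊x⌋)/(⌊x⌋ + 1), where H_n = ∑_{k=1}^{n} 1/k is the n-th harmonic number. Then for every integer n ≥ 1 and every real a with 1 ≤ a ≤ n, one has a/n + h(n − a) ≤ h(n), with equality if and only if a = 1. -/
/-- The piecewise-linear interpolation of the harmonic numbers:
`h x = H_⌊x⌋ + (x − ⌊x⌋)/(⌊x⌋ + 1)`, where `H_n = ∑_{k=1}^n 1/k`. -/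
noncomputable def harmonicInterp (x : ℝ) : ℝ :=
  (∑ k ∈ Finset.range ⌊x⌋₊, (1 : ℝ) / (k + 1)) + (x - ⌊x⌋₊) / (⌊x⌋₊ + 1)

/-! `h` is concave, with slope `1/(m+1)` on `[m, m+1]`. Hence the chord of `h` ending at an
integer `m` has slope at least `1/m`, the slope of its last piece. Since `h n = h (n-1) + 1/n`,
this gives `h (n - a) + (a - 1)/(n - 1) ≤ h n - 1/n`, and `(a - 1)/(n - 1) > (a - 1)/n` as soon
as `a > 1`. -/

lemma harmonicInterp_natCast (m : ℕ) :
    harmonicInterp m = ∑ k ∈ Finset.range m, (1 : ℝ) / (k + 1) := by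
  simp [harmonicInterp]

lemma harmonicInterp_natCast_add_one (m : ℕ) :
    harmonicInterp ((m : ℝ) + 1) = harmonicInterp m + 1 / ((m : ℝ) + 1) := by
  rw [← Nat.cast_succ, harmonicInterp_natCast, harmonicInterp_natCast, Finset.sum_range_succ,
    Nat.cast_succ]

lemma harmonicInterp_of_mem_Icc {m : ℕ} {x : ℝ} (hmx : (m : ℝ) ≤ x) (hxm : x ≤ m + 1) :
    harmonicInterp x = harmonicInterp m + (x - m) / (m + 1) := by
  rcases hxm.eq_or_lt with rfl | hxm
  · rw [harmonicInterp_natCast_add_one, add_sub_cancel_left]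
  · have hfloor : ⌊x⌋₊ = m := (Nat.floor_eq_iff ((Nat.cast_nonneg m).trans hmx)).2 ⟨hmx, hxm⟩
    rw [harmonicInterp, hfloor, harmonicInterp_natCast]

lemma harmonicInterp_add_sub_div_le (m : ℕ) {x : ℝ} (hx : 0 ≤ x) (hxm : x ≤ m) :
    harmonicInterp x + (m - x) / m ≤ harmonicInterp m := by
  induction m with
  | zero =>
    obtain rfl : x = 0 := le_antisymm (by simpa using hxm) hx
    simp
  | succ m ih =>
    push_cast at hxm ⊢
    rcases le_or_gt (m : ℝ) x with hmx | hxm'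
    · rw [harmonicInterp_of_mem_Icc hmx hxm, harmonicInterp_natCast_add_one]
      have hm : (m : ℝ) + 1 ≠ 0 := by positivity
      apply le_of_eq
      field_simp
      ring
    · have hm : (0 : ℝ) < m := hx.trans_lt hxm'
      have hslope : ((m : ℝ) + 1 - x) / (m + 1) ≤ (m - x) / m + 1 / (m + 1) := by
        rw [← sub_le_iff_le_add, ← sub_div, sub_right_comm, add_sub_cancel_right]
        exact div_le_div_of_nonneg_left (by linarith) hm (by linarith)
      rw [harmonicInterp_natCast_add_one]
      linarith [ih hxm'.le]

lemma div_add_harmonicInterp_sub_lt (m : ℕ) {a : ℝ} (ha : 1 < a) (ham : a ≤ m + 1) :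
    a / (m + 1) + harmonicInterp (m + 1 - a) < harmonicInterp ((m : ℝ) + 1) := by
  have hm : (0 : ℝ) < m := by linarith
  have hchord := harmonicInterp_add_sub_div_le m (x := m + 1 - a) (by linarith) (by linarith)
  have hslope : (a - 1) / (m + 1) < (a - 1) / m :=
    div_lt_div_of_pos_left (by linarith) hm (by linarith)
  have hsplit : a / ((m : ℝ) + 1) = (a - 1) / (m + 1) + 1 / (m + 1) := by ring
  rw [harmonicInterp_natCast_add_one, hsplit]
  rw [show (m : ℝ) - (m + 1 - a) = a - 1 by ring] at hchord
  linarith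

theorem stmt_3_general (n : ℕ) (a : ℝ) (ha1 : 1 ≤ a) (han : a ≤ n) :
    a / n + harmonicInterp (n - a) ≤ harmonicInterp n ∧
    (a / n + harmonicInterp (n - a) = harmonicInterp n ↔ a = 1) := by
  obtain ⟨m, rfl⟩ : ∃ m, n = m + 1 :=
    Nat.exists_eq_add_one.2 (by exact_mod_cast ha1.trans han)
  push_cast at han ⊢
  rcases ha1.eq_or_lt with rfl | ha1
  · have hstep : 1 / ((m : ℝ) + 1) + harmonicInterp (m + 1 - 1) = harmonicInterp (m + 1) := by
      rw [add_sub_cancel_right, harmonicInterp_natCast_add_one, add_comm]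
    exact ⟨hstep.le, iff_of_true hstep rfl⟩
  · have hlt := div_add_harmonicInterp_sub_lt m ha1 han
    exact ⟨hlt.le, iff_of_false hlt.ne ha1.ne'⟩

/-- For every integer `n ≥ 1` and real `1 ≤ a ≤ n`, one has `a/n + h(n − a) ≤ h(n)`,
with equality if and only if `a = 1`. -/
theorem stmt_3 (n : ℕ) (hn : 1 ≤ n) (a : ℝ) (ha1 : 1 ≤ a) (han : a ≤ n) :
    a / n + harmonicInterp (n - a) ≤ harmonicInterp n ∧
    (a / n + harmonicInterp (n - a) = harmonicInterp n ↔ a = 1) :=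
  stmt_3_general n a ha1 han
end

section
/- Let n ≥ 1 be an integer, p ∈ (0,1) with p ≠ 1/2, and set λ = p/(1−p). Let γ_1, …, γ_{n−1} ∈ (0,1]. Define S_n = ∑_{i=1}^{n−1} (1/γ_i)(1 − λ^{n−i}) and, for 0 ≤ k ≤ n, E_k = ((1+λ)/(1−λ)) · ( S_n (1−λ^k)/(1−λ^n) − ∑_{i=1}^{k−1} (1/γ_i)(1 − λ^{k−i}) ). Then E_0 = 0, E_n = 0, and for every 0 < k < n one has γ_k E_k = 1 + γ_k ( p E_{k−1} + (1−p) E_{k+1} ). -/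
/-- The explicit solution of the recurrence for the mean absorption time of the
gambler's ruin with delays: `E_0 = 0`, `E_n = 0`, and
`γ_k E_k = 1 + γ_k (p E_{k−1} + (1−p) E_{k+1})` for `0 < k < n`. -/
theorem stmt_7 (n : ℕ) (hn : 1 ≤ n) (p : ℝ) (hp0 : 0 < p) (hp1 : p < 1) (hp : p ≠ 1/2)
    (l : ℝ) (hl : l = p / (1 - p))
    (γ : ℕ → ℝ) (hγ : ∀ i, 1 ≤ i → i ≤ n - 1 → γ i ∈ Set.Ioc (0 : ℝ) 1)
    (Sn : ℝ) (hSn : Sn = ∑ i ∈ Finset.Ico 1 n, (1 / γ i) * (1 - l ^ (n - i)))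
    (E : ℕ → ℝ)
    (hE : ∀ k, E k = ((1 + l) / (1 - l)) *
      (Sn * (1 - l ^ k) / (1 - l ^ n) -
        ∑ i ∈ Finset.Ico 1 k, (1 / γ i) * (1 - l ^ (k - i)))) :
    E 0 = 0 ∧ E n = 0 ∧
    ∀ k, 0 < k → k < n →
      γ k * E k = 1 + γ k * (p * E (k - 1) + (1 - p) * E (k + 1)) := by
  have h1p : (1 : ℝ) - p ≠ 0 := by linarith
  have hpl : (1 - p) * l = p := by rw [hl]; field_simp
  have hlpos : 0 < l := by rw [hl]; exact div_pos hp0 (by linarith)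
  have hl1 : l ≠ 1 := by
    intro h
    rw [h, mul_one] at hpl
    exact hp (by linarith)
  have h1l : (1 : ℝ) - l ≠ 0 := by
    intro h; exact hl1 (by linarith)
  have hln : l ^ n ≠ 1 := by
    rcases lt_trichotomy l 1 with h | h | h
    · have : l ^ n < 1 := pow_lt_one₀ (le_of_lt hlpos) h (by omega)
      linarith
    · exact absurd h hl1
    · have : 1 < l ^ n := one_lt_pow₀ h (by omega)
      linarith
  have h1ln : (1 : ℝ) - l ^ n ≠ 0 := by
    intro h; exact hln (by linarith)
  refine ⟨?_, ?_, ?_⟩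
  · rw [hE 0]; simp
  · rw [hE n, mul_div_assoc, div_self h1ln, mul_one, hSn, sub_self, mul_zero]
  · intro k hk0 hkn
    obtain ⟨m, rfl⟩ : ∃ m, k = m + 1 := ⟨k - 1, by omega⟩
    have hγne : γ (m + 1) ≠ 0 := by
      have := (hγ (m + 1) (by omega) (by omega)).1
      linarith
    have hγinv : γ (m + 1) * (1 / γ (m + 1)) = 1 := by field_simp
    -- scalar harmonicity
    have hfk : p * (1 - l ^ m) + (1 - p) * (1 - l ^ (m + 2)) = 1 - l ^ (m + 1) := by
      linear_combination (l ^ m * (1 - l)) * hpl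
    -- sum identity
    have hS1 : ∑ i ∈ Finset.Ico 1 (m + 1), (1 / γ i) * (1 - l ^ (m - i)) =
        ∑ i ∈ Finset.Ico 1 m, (1 / γ i) * (1 - l ^ (m - i)) := by
      rcases Nat.eq_zero_or_pos m with h | h
      · subst h; simp
      · rw [Finset.sum_Ico_succ_top h]
        simp
    have hS3 : ∑ i ∈ Finset.Ico 1 (m + 2), (1 / γ i) * (1 - l ^ (m + 2 - i)) =
        (∑ i ∈ Finset.Ico 1 (m + 1), (1 / γ i) * (1 - l ^ (m + 2 - i))) +
          (1 / γ (m + 1)) * (1 - l ^ 1) := by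
      rw [Finset.sum_Ico_succ_top (by omega : 1 ≤ m + 1)]
      have : m + 2 - (m + 1) = 1 := by omega
      rw [this]
    have key : p * (∑ i ∈ Finset.Ico 1 m, (1 / γ i) * (1 - l ^ (m - i))) +
        (1 - p) * (∑ i ∈ Finset.Ico 1 (m + 2), (1 / γ i) * (1 - l ^ (m + 2 - i))) =
        (∑ i ∈ Finset.Ico 1 (m + 1), (1 / γ i) * (1 - l ^ (m + 1 - i))) +
          (1 - p) * (1 - l) * (1 / γ (m + 1)) := by
      rw [← hS1, hS3, mul_add, ← add_assoc, Finset.mul_sum, Finset.mul_sum,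
        ← Finset.sum_add_distrib]
      have : ∀ i ∈ Finset.Ico 1 (m + 1),
          p * ((1 / γ i) * (1 - l ^ (m - i))) +
            (1 - p) * ((1 / γ i) * (1 - l ^ (m + 2 - i))) =
          (1 / γ i) * (1 - l ^ (m + 1 - i)) := by
        intro i hi
        rw [Finset.mem_Ico] at hi
        have e1 : m + 2 - i = (m - i) + 2 := by omega
        have e2 : m + 1 - i = (m - i) + 1 := by omega
        rw [e1, e2]
        linear_combination (1 / γ i * l ^ (m - i) * (1 - l)) * hpl
      rw [Finset.sum_congr rfl this]
      ring
    have hsum' : γ (m + 1) *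
        (p * (∑ i ∈ Finset.Ico 1 m, (1 / γ i) * (1 - l ^ (m - i))) +
          (1 - p) * (∑ i ∈ Finset.Ico 1 (m + 2), (1 / γ i) * (1 - l ^ (m + 2 - i)))) =
        γ (m + 1) * (∑ i ∈ Finset.Ico 1 (m + 1), (1 / γ i) * (1 - l ^ (m + 1 - i))) +
          (1 - p) * (1 - l) := by
      linear_combination γ (m + 1) * key + (1 - p) * (1 - l) * hγinv
    have hC : (1 + l) / (1 - l) * (1 - l) = 1 + l := div_mul_cancel₀ _ h1l
    have hCl : (1 + l) * (1 - p) = 1 := by linear_combination hpl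
    simp only [Nat.add_sub_cancel]
    rw [hE (m + 1), hE m, hE (m + 2)]
    linear_combination (-(((1 + l) / (1 - l)) * (Sn / (1 - l ^ n)) * γ (m + 1))) * hfk +
      ((1 + l) / (1 - l)) * hsum' + (1 - p) * hC + hCl
end

section
/- Let α > 1 be a real number. The function f(λ) = ((1−λ)/(1+λ)) · ((1+λ^α)/(1−λ^α)) is nonnegative and strictly decreasing on [0,1). -/
/-!
Write `a = λ^α`. A direct computation gives
`f'(λ) = 2 (α a (λ⁻¹ - λ) - (1 - a²)) / ((1 + λ)² (1 - a)²)`, so `f' < 0` on `(0, 1)` amounts to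
`α (λ⁻¹ - λ) < a⁻¹ - a`. Substituting `λ = e^{-s}` this is `α sinh s < sinh (α s)` for `s > 0`,
which holds because `cosh` increases on `[0, ∞)`. Continuity of `f` at `λ = 0` (where `0 ^ α = 0`)
extends the strict monotonicity to `[0, 1)`.
-/

open Real Set

lemma mul_sinh_lt_sinh_mul {α s : ℝ} (hα : 1 < α) (hs : 0 < s) : α * sinh s < sinh (α * s) := by
  have hderiv (t : ℝ) : HasDerivAt (fun t => sinh (α * t) - α * sinh t)
      (α * (cosh (α * t) - cosh t)) t := by
    refine ((((hasDerivAt_id' t).const_mul α).sinh).sub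
      ((hasDerivAt_sinh t).const_mul α)).congr_deriv ?_
    ring
  have hmono : StrictMonoOn (fun t => sinh (α * t) - α * sinh t) (Ici 0) := by
    refine strictMonoOn_of_deriv_pos (convex_Ici 0) (by fun_prop) fun t ht => ?_
    rw [interior_Ici] at ht
    have ht : 0 < t := ht
    rw [(hderiv t).deriv]
    have : cosh t < cosh (α * t) := by
      rw [cosh_lt_cosh, abs_of_pos ht, abs_of_pos (by positivity)]
      nlinarith
    nlinarith
  have := hmono self_mem_Ici hs.le hs
  simp only [mul_zero, sinh_zero, sub_zero] at this
  linarith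

lemma mul_inv_sub_lt_inv_rpow_sub_rpow {α x : ℝ} (hα : 1 < α) (hx0 : 0 < x) (hx1 : x < 1) :
    α * (x⁻¹ - x) < (x ^ α)⁻¹ - x ^ α := by
  have hs : 0 < -log x := neg_pos.mpr (log_neg hx0 hx1)
  have key := mul_sinh_lt_sinh_mul hα hs
  have hpow : exp (α * -log x) = (x ^ α)⁻¹ := by
    rw [rpow_def_of_pos hx0, ← exp_neg]
    ring_nf
  have hneg : exp (-(α * -log x)) = x ^ α := by
    rw [exp_neg, hpow, inv_inv]
  rw [sinh_eq, sinh_eq, hpow, hneg, neg_neg, exp_log hx0, exp_neg, exp_log hx0] at key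
  linarith

noncomputable def ruinRatio (α l : ℝ) : ℝ := (1 - l) / (1 + l) * ((1 + l ^ α) / (1 - l ^ α))

lemma hasDerivAt_ruinRatio {α x : ℝ} (hx : 0 < x) (hxα : x ^ α ≠ 1) :
    HasDerivAt (ruinRatio α)
      (2 * (α * x ^ α * (x⁻¹ - x) - (1 - (x ^ α) ^ 2)) / ((1 + x) ^ 2 * (1 - x ^ α) ^ 2)) x := by
  have hpow : HasDerivAt (fun l : ℝ => l ^ α) (α * (x ^ α / x)) x := by
    simpa only [rpow_sub_one hx.ne'] using hasDerivAt_rpow_const (p := α) (Or.inl hx.ne')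
  have h1x : 1 + x ≠ 0 := by positivity
  have h1a : 1 - x ^ α ≠ 0 := sub_ne_zero.mpr (Ne.symm hxα)
  refine ((((hasDerivAt_id' x).const_sub 1).div ((hasDerivAt_id' x).const_add 1) h1x).mul
    ((hpow.const_add 1).div (hpow.const_sub 1) h1a)).congr_deriv ?_
  simp only [Pi.div_apply]
  field_simp
  ring

lemma deriv_ruinRatio_neg {α x : ℝ} (hα : 1 < α) (hx0 : 0 < x) (hx1 : x < 1) :
    deriv (ruinRatio α) x < 0 := by
  have hxα : x ^ α < 1 := rpow_lt_one hx0.le hx1 (by linarith)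
  rw [(hasDerivAt_ruinRatio hx0 hxα.ne).deriv]
  have hpos : 0 < x ^ α := rpow_pos_of_pos hx0 α
  have key := mul_lt_mul_of_pos_left (mul_inv_sub_lt_inv_rpow_sub_rpow hα hx0 hx1) hpos
  rw [mul_sub (x ^ α), mul_inv_cancel₀ hpos.ne'] at key
  refine div_neg_of_neg_of_pos ?_ (by have := sub_pos.mpr hxα; positivity)
  nlinarith

lemma ruinRatio_nonneg {α l : ℝ} (hα : 0 < α) (hl : l ∈ Ico (0 : ℝ) 1) : 0 ≤ ruinRatio α l := by
  have hlα : l ^ α < 1 := rpow_lt_one hl.1 hl.2 hα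
  have := rpow_nonneg hl.1 α
  exact mul_nonneg (div_nonneg (by linarith [hl.2]) (by linarith [hl.1]))
    (div_nonneg (by linarith) (by linarith))

lemma continuousOn_ruinRatio {α : ℝ} (hα : 0 < α) : ContinuousOn (ruinRatio α) (Ico 0 1) := by
  have hpow : ContinuousOn (fun l : ℝ => l ^ α) (Ico 0 1) :=
    continuousOn_id.rpow_const fun _ _ => Or.inr hα.le
  refine ((continuousOn_const.sub continuousOn_id).div (continuousOn_const.add continuousOn_id)
    fun l hl => ?_).mul ((continuousOn_const.add hpow).div (continuousOn_const.sub hpow)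
    fun l hl => ?_)
  · show 1 + l ≠ 0
    linarith [hl.1]
  · show 1 - l ^ α ≠ 0
    linarith [rpow_lt_one hl.1 hl.2 hα]

/-- For `α > 1`, the function `f(λ) = ((1−λ)/(1+λ))·((1+λ^α)/(1−λ^α))` is
nonnegative and strictly decreasing on `[0, 1)`. -/
theorem stmt_10 (α : ℝ) (hα : 1 < α) :
    (∀ l ∈ Set.Ico (0 : ℝ) 1,
        0 ≤ ((1 - l) / (1 + l)) * ((1 + l ^ α) / (1 - l ^ α))) ∧
    StrictAntiOn (fun l : ℝ => ((1 - l) / (1 + l)) * ((1 + l ^ α) / (1 - l ^ α)))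
      (Set.Ico 0 1) := by
  have hα0 : 0 < α := by linarith
  refine ⟨fun l hl => ruinRatio_nonneg hα0 hl, ?_⟩
  refine strictAntiOn_of_deriv_neg (convex_Ico 0 1) (continuousOn_ruinRatio hα0) fun x hx => ?_
  rw [interior_Ico] at hx
  exact deriv_ruinRatio_neg hα hx.1 hx.2
end

section
/- Let n, i, k be integers with 0 < i ≤ k and k + i ≤ n and k ≤ n. Then for every real λ, (2 − λ^{n−i} − λ^i)(2 − λ^k − λ^{n−k}) − (2 − λ^{k−i} − λ^{n−k−i})(1 − λ^n) = (1 − λ^i) · [ 2(1 − λ^{n−i}) + (1 − λ^i)(λ^{k−i} + λ^{n−k−i}) ]. -/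
/-- Polynomial identity factorising the coefficient `G(λ)` of `1/γ_i` in the symmetrised
mean absorption time of the gambler's ruin with symmetric delays. -/
theorem stmt_13 (n i k : ℕ) (hi : 0 < i) (hik : i ≤ k) (hkin : k + i ≤ n) (hkn : k ≤ n)
    (l : ℝ) :
    (2 - l ^ (n - i) - l ^ i) * (2 - l ^ k - l ^ (n - k))
      - (2 - l ^ (k - i) - l ^ (n - k - i)) * (1 - l ^ n)
    = (1 - l ^ i) *
        (2 * (1 - l ^ (n - i)) + (1 - l ^ i) * (l ^ (k - i) + l ^ (n - k - i))) := by
  obtain ⟨b, rfl⟩ : ∃ b, k = i + b := ⟨k - i, by omega⟩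
  obtain ⟨c, rfl⟩ : ∃ c, n = i + b + i + c := ⟨n - (i + b + i), by omega⟩
  have h1 : i + b + i + c - i = i + b + c := by omega
  have h2 : i + b - i = b := by omega
  have h3 : i + b + i + c - (i + b) = i + c := by omega
  have h4 : i + b + i + c - (i + b) - i = c := by omega
  have h5 : i + c - i = c := by omega
  simp only [h1, h2, h3, h4, h5, pow_add]
  ring
end

section
/- Let n, i, k be integers with 0 < i ≤ k and 2k ≤ n. The function H(λ) = (1 + λ^i) · [ 2(1 − λ^{n−i}) + (1 − λ^i)(λ^{k−i} + λ^{n−k−i}) ] / (1 − λ^n) is nonnegative and monotonically increasing on (0,1). -/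
private lemma pow_cross {x y : ℝ} (hx : 0 ≤ x) (hxy : x ≤ y) {j l : ℕ} (hjl : j ≤ l) :
    y ^ j * x ^ l ≤ x ^ j * y ^ l := by
  obtain ⟨d, rfl⟩ := Nat.exists_eq_add_of_le hjl
  have hy : 0 ≤ y := hx.trans hxy
  calc y ^ j * x ^ (j + d) = (x ^ j * y ^ j) * x ^ d := by ring
    _ ≤ (x ^ j * y ^ j) * y ^ d :=
        mul_le_mul_of_nonneg_left (pow_le_pow_left₀ hx hxy d) (by positivity)
    _ = x ^ j * y ^ (j + d) := by ring

private lemma ratio_antitone {x y : ℝ} (hx : 0 ≤ x) (hxy : x ≤ y) (hy : y ≤ 1)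
    {p n : ℕ} (hpn : p ≤ n) :
    (1 - y ^ p) * (1 - x ^ n) ≤ (1 - x ^ p) * (1 - y ^ n) := by
  have hx1 : x ≤ 1 := hxy.trans hy
  have key : (∑ j ∈ Finset.range p, y ^ j) * (∑ j ∈ Finset.range n, x ^ j) ≤
      (∑ j ∈ Finset.range p, x ^ j) * (∑ j ∈ Finset.range n, y ^ j) := by
    rw [← Finset.sum_range_add_sum_Ico (fun j => x ^ j) hpn,
        ← Finset.sum_range_add_sum_Ico (fun j => y ^ j) hpn]
    have h2 : (∑ j ∈ Finset.range p, y ^ j) * (∑ l ∈ Finset.Ico p n, x ^ l) ≤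
        (∑ j ∈ Finset.range p, x ^ j) * (∑ l ∈ Finset.Ico p n, y ^ l) := by
      rw [Finset.sum_mul_sum, Finset.sum_mul_sum]
      refine Finset.sum_le_sum fun j hj => Finset.sum_le_sum fun l hl => ?_
      exact pow_cross hx hxy
        (by have h1 := Finset.mem_range.mp hj; have h2 := (Finset.mem_Ico.mp hl).1; omega)
    nlinarith [h2]
  have gy : ∀ m : ℕ, (1 : ℝ) - y ^ m = (1 - y) * ∑ j ∈ Finset.range m, y ^ j :=
    fun m => by linear_combination geom_sum_mul y m
  have gx : ∀ m : ℕ, (1 : ℝ) - x ^ m = (1 - x) * ∑ j ∈ Finset.range m, x ^ j :=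
    fun m => by linear_combination geom_sum_mul x m
  rw [gy p, gx n, gx p, gy n]
  calc (1 - y) * (∑ j ∈ Finset.range p, y ^ j) * ((1 - x) * ∑ j ∈ Finset.range n, x ^ j)
      = ((1 - x) * (1 - y)) * ((∑ j ∈ Finset.range p, y ^ j) * ∑ j ∈ Finset.range n, x ^ j) := by
        ring
    _ ≤ ((1 - x) * (1 - y)) * ((∑ j ∈ Finset.range p, x ^ j) * ∑ j ∈ Finset.range n, y ^ j) :=
        mul_le_mul_of_nonneg_left key (by nlinarith)
    _ = (1 - x) * (∑ j ∈ Finset.range p, x ^ j) * ((1 - y) * ∑ j ∈ Finset.range n, y ^ j) := by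
        ring

private lemma psi_antitone (p q r n : ℕ) (hn : p + q + r = n) (hn0 : 0 < n)
    {x y : ℝ} (hx : 0 < x) (hxy : x ≤ y) (hy : y < 1) :
    (1 - y ^ p) * (1 - y ^ q) * (1 - y ^ r) / (1 - y ^ n) ≤
      (1 - x ^ p) * (1 - x ^ q) * (1 - x ^ r) / (1 - x ^ n) := by
  have hx0 : (0 : ℝ) ≤ x := hx.le
  have hx1 : x < 1 := lt_of_le_of_lt hxy hy
  have hy0 : (0 : ℝ) ≤ y := hx0.trans hxy
  have hdx : (0 : ℝ) < 1 - x ^ n := by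
    have := pow_lt_one₀ hx0 hx1 hn0.ne'
    linarith
  have hdy : (0 : ℝ) < 1 - y ^ n := by
    have := pow_lt_one₀ hy0 hy hn0.ne'
    linarith
  rw [div_le_div_iff₀ hdy hdx]
  have hq : (0:ℝ) ≤ 1 - y ^ q := by have := pow_le_one₀ hy0 hy.le (n := q); linarith
  have hr : (0:ℝ) ≤ 1 - y ^ r := by have := pow_le_one₀ hy0 hy.le (n := r); linarith
  have hqx : (1:ℝ) - y ^ q ≤ 1 - x ^ q := by
    have := pow_le_pow_left₀ hx0 hxy q; linarith
  have hrx : (1:ℝ) - y ^ r ≤ 1 - x ^ r := by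
    have := pow_le_pow_left₀ hx0 hxy r; linarith
  have hpx : (0:ℝ) ≤ 1 - x ^ p := by have := pow_le_one₀ hx0 hx1.le (n := p); linarith
  have h1 : (1 - y ^ p) * (1 - x ^ n) ≤ (1 - x ^ p) * (1 - y ^ n) :=
    ratio_antitone hx0 hxy hy.le (by omega)
  calc (1 - y ^ p) * (1 - y ^ q) * (1 - y ^ r) * (1 - x ^ n)
      = ((1 - y ^ p) * (1 - x ^ n)) * ((1 - y ^ q) * (1 - y ^ r)) := by ring
    _ ≤ ((1 - x ^ p) * (1 - y ^ n)) * ((1 - y ^ q) * (1 - y ^ r)) :=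
        mul_le_mul_of_nonneg_right h1 (mul_nonneg hq hr)
    _ ≤ ((1 - x ^ p) * (1 - y ^ n)) * ((1 - x ^ q) * (1 - x ^ r)) :=
        mul_le_mul_of_nonneg_left
          (mul_le_mul hqx hrx hr (by linarith)) (mul_nonneg hpx hdy.le)
    _ = (1 - x ^ p) * (1 - x ^ q) * (1 - x ^ r) * (1 - y ^ n) := by ring

/-- For `0 < i ≤ k` and `2k ≤ n`, the function
`H(λ) = (1+λⁱ)[2(1−λ^{n−i}) + (1−λⁱ)(λ^{k−i}+λ^{n−k−i})]/(1−λⁿ)` is nonnegative and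
monotonically increasing on `(0,1)`. -/
theorem stmt_14 (n i k : ℕ) (hi : 0 < i) (hik : i ≤ k) (hkn : 2 * k ≤ n) :
    (∀ l ∈ Set.Ioo (0 : ℝ) 1,
        0 ≤ (1 + l ^ i) *
          (2 * (1 - l ^ (n - i)) + (1 - l ^ i) * (l ^ (k - i) + l ^ (n - k - i))) /
          (1 - l ^ n)) ∧
    MonotoneOn (fun l : ℝ => (1 + l ^ i) *
        (2 * (1 - l ^ (n - i)) + (1 - l ^ i) * (l ^ (k - i) + l ^ (n - k - i))) /
        (1 - l ^ n))
      (Set.Ioo 0 1) := by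
  constructor
  · intro l hl
    obtain ⟨hl0, hl1⟩ := hl
    have hp : ∀ m : ℕ, (0:ℝ) ≤ 1 - l ^ m := fun m => by
      have := pow_le_one₀ hl0.le hl1.le (n := m); linarith
    apply div_nonneg _ (hp n)
    have h1 : (0:ℝ) ≤ 1 + l ^ i := by positivity
    have h2 : (0:ℝ) ≤ 2 * (1 - l ^ (n - i)) + (1 - l ^ i) * (l ^ (k - i) + l ^ (n - k - i)) := by
      have := hp (n - i); have := hp i
      have : (0:ℝ) ≤ l ^ (k - i) + l ^ (n - k - i) := by positivity
      nlinarith [hp (n - i), hp i]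
    exact mul_nonneg h1 h2
  · obtain ⟨a, rfl⟩ : ∃ a, k = i + a := ⟨k - i, by omega⟩
    obtain ⟨c, rfl⟩ : ∃ c, n = 2 * (i + a) + c := ⟨n - 2 * (i + a), by omega⟩
    have hn0 : 0 < 2 * (i + a) + c := by omega
    simp only [show 2 * (i + a) + c - i = i + (a + (a + c)) from by omega,
      show i + a - i = a from by omega,
      show 2 * (i + a) + c - (i + a) - i = a + c from by omega]
    intro x hx y hy hxy
    obtain ⟨hx0, hx1⟩ := hx
    obtain ⟨hy0, hy1⟩ := hy
    have hid : ∀ l : ℝ, 0 < l → l < 1 →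
        (1 + l ^ i) * (2 * (1 - l ^ (i + (a + (a + c)))) +
            (1 - l ^ i) * (l ^ a + l ^ (a + c))) / (1 - l ^ (2 * (i + a) + c)) =
        4 - ((1 - l ^ i) * (1 - l ^ a) * (1 - l ^ (i + a + c)) / (1 - l ^ (2 * (i + a) + c)) +
             (1 - l ^ i) * (1 - l ^ (i + a)) * (1 - l ^ (a + c)) /
               (1 - l ^ (2 * (i + a) + c))) := by
      intro l hl0 hl1
      have hne : (1 : ℝ) - l ^ (2 * (i + a) + c) ≠ 0 := by
        have := pow_lt_one₀ hl0.le hl1 hn0.ne'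
        intro h; linarith
      field_simp
      ring
    simp only [hid x hx0 hx1, hid y hy0 hy1]
    have h1 := psi_antitone i a (i + a + c) (2 * (i + a) + c) (by omega) hn0 hx0 hxy hy1
    have h2 := psi_antitone i (i + a) (a + c) (2 * (i + a) + c) (by omega) hn0 hx0 hxy hy1
    linarith
end

section
/- Let α and β be real numbers with 0 < α ≤ β ≤ 1. The function Q(t) = ( 2 sinh((1−α)t) + sinh((α+β−1)t) + sinh((1−β+α)t) ) / ( 2 sinh(t) ) is nonnegative and monotonically nonincreasing on (0, ∞). -/
open Real Set

/-! Write `W(w, t) = w sinh((2-w)t) - (2-w) sinh(wt)`. Each term `sinh(at)/sinh t` of `Q` has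
derivative `-W(1-a, t)/(2 sinh² t)`, so `Q' ≤ 0` amounts to `2 W(α) + W(2-α-β) + W(β-α) ≥ 0`.
For `w ∈ (0,1]`, `W(w)/w = 2 sinh t cosh((1-w)t) - 2t · sinh(wt)/(wt)` decreases because
`sinh x / x` increases; hence `W ≥ 0` on `[0,1]` (it vanishes at `w = 1`) and `W` is subadditive
there. If `α + β ≥ 1` all three arguments lie in `[0,1]`; otherwise
`W(2-α-β) = -W(α+β) ≥ -(W(α) + W(β)) ≥ -(2 W(α) + W(β-α))`. -/

lemma convexOn_sinh_Ici : ConvexOn ℝ (Ici 0) sinh := by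
  refine MonotoneOn.convexOn_of_deriv (convex_Ici 0) continuous_sinh.continuousOn
    differentiable_sinh.differentiableOn ?_
  rw [Real.deriv_sinh, interior_Ici]
  intro x hx y hy hxy
  rw [cosh_le_cosh, abs_of_pos hx, abs_of_pos hy]
  exact hxy

lemma monotoneOn_sinh_div_self : MonotoneOn (fun x => sinh x / x) (Ioi 0) := by
  intro x hx y hy hxy
  simpa using convexOn_sinh_Ici.secant_mono self_mem_Ici (mem_Ici_of_Ioi hx)
    (mem_Ici_of_Ioi hy) hx.ne' (ne_of_gt hy) hxy

noncomputable def sinhDefect (w t : ℝ) : ℝ := w * sinh ((2 - w) * t) - (2 - w) * sinh (w * t)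

@[simp] lemma sinhDefect_zero (t : ℝ) : sinhDefect 0 t = 0 := by simp [sinhDefect]

@[simp] lemma sinhDefect_one (t : ℝ) : sinhDefect 1 t = 0 := by norm_num [sinhDefect]

lemma sinhDefect_two_sub (w t : ℝ) : sinhDefect (2 - w) t = -sinhDefect w t := by
  simp only [sinhDefect, sub_sub_cancel]
  ring

lemma sinhDefect_div_self {w t : ℝ} (hw : w ≠ 0) (ht : t ≠ 0) :
    sinhDefect w t / w = 2 * sinh t * cosh ((1 - w) * t) - 2 * t * (sinh (w * t) / (w * t)) := by
  have hsum : sinh ((2 - w) * t) + sinh (w * t) = 2 * sinh t * cosh ((1 - w) * t) := by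
    rw [show (2 - w) * t = t + (1 - w) * t by ring, show w * t = t - (1 - w) * t by ring,
      sinh_add, sinh_sub]
    ring
  rw [← hsum, sinhDefect]
  field_simp
  ring

lemma antitoneOn_sinhDefect_div_self {t : ℝ} (ht : 0 < t) :
    AntitoneOn (fun w => sinhDefect w t / w) (Ioc 0 1) := by
  rintro u ⟨hu, -⟩ w ⟨hw, hw1⟩ huw
  simp only [sinhDefect_div_self hu.ne' ht.ne', sinhDefect_div_self hw.ne' ht.ne']
  have hcosh : cosh ((1 - w) * t) ≤ cosh ((1 - u) * t) := by
    rw [cosh_le_cosh, abs_of_nonneg (by nlinarith), abs_of_nonneg (by nlinarith)]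
    nlinarith
  have hsinc : sinh (u * t) / (u * t) ≤ sinh (w * t) / (w * t) :=
    monotoneOn_sinh_div_self (mul_pos hu ht) (mul_pos hw ht) (by nlinarith)
  have hsinh : 0 ≤ sinh t := by positivity
  nlinarith [mul_le_mul_of_nonneg_left hcosh hsinh]

lemma sinhDefect_nonneg {w t : ℝ} (ht : 0 < t) (hw0 : 0 ≤ w) (hw1 : w ≤ 1) :
    0 ≤ sinhDefect w t := by
  rcases hw0.eq_or_lt with rfl | hw0
  · simp
  have h := antitoneOn_sinhDefect_div_self ht ⟨hw0, hw1⟩ ⟨one_pos, le_rfl⟩ hw1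
  simp only [sinhDefect_one, zero_div] at h
  simpa using (le_div_iff₀ hw0).mp h

lemma map_add_le_of_antitoneOn_div {f : ℝ → ℝ} {c x y : ℝ}
    (hf : AntitoneOn (fun x => f x / x) (Ioc 0 c)) (hf0 : f 0 = 0)
    (hx : 0 ≤ x) (hy : 0 ≤ y) (hxy : x + y ≤ c) : f (x + y) ≤ f x + f y := by
  rcases hx.eq_or_lt with rfl | hx
  · simp [hf0]
  rcases hy.eq_or_lt with rfl | hy
  · simp [hf0]
  have hxy0 : 0 < x + y := by positivity
  have hmem : x + y ∈ Ioc 0 c := ⟨hxy0, hxy⟩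
  have hx' := hf ⟨hx, by linarith⟩ hmem (by linarith)
  have hy' := hf ⟨hy, by linarith⟩ hmem (by linarith)
  simp only at hx' hy'
  calc f (x + y) = x * (f (x + y) / (x + y)) + y * (f (x + y) / (x + y)) := by
        field_simp
    _ ≤ x * (f x / x) + y * (f y / y) := by gcongr
    _ = f x + f y := by field_simp

lemma sinhDefect_combination_nonneg {α β t : ℝ} (hα : 0 < α) (hαβ : α ≤ β) (hβ : β ≤ 1)
    (ht : 0 < t) : 0 ≤ 2 * sinhDefect α t + sinhDefect (2 - α - β) t + sinhDefect (β - α) t := by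
  have hα' : 0 ≤ sinhDefect α t := sinhDefect_nonneg ht hα.le (hαβ.trans hβ)
  have hβα : 0 ≤ sinhDefect (β - α) t := sinhDefect_nonneg ht (by linarith) (by linarith)
  rcases le_or_gt 1 (α + β) with hs | hs
  · have := sinhDefect_nonneg ht (w := 2 - α - β) (by linarith) (by linarith)
    linarith
  · have hW := antitoneOn_sinhDefect_div_self ht
    have h1 := map_add_le_of_antitoneOn_div hW (sinhDefect_zero t) hα.le (hα.le.trans hαβ) hs.le
    have h2 := map_add_le_of_antitoneOn_div hW (sinhDefect_zero t) hα.le (sub_nonneg.mpr hαβ)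
      (by linarith)
    rw [add_sub_cancel] at h2
    rw [show 2 - α - β = 2 - (α + β) by ring, sinhDefect_two_sub]
    linarith

lemma hasDerivAt_sinh_mul_div_sinh (a : ℝ) {t : ℝ} (ht : t ≠ 0) :
    HasDerivAt (fun t => sinh (a * t) / sinh t) (-sinhDefect (1 - a) t / (2 * sinh t ^ 2)) t := by
  have hs : sinh t ≠ 0 := sinh_ne_zero.mpr ht
  refine ((((hasDerivAt_id t).const_mul a).sinh).div (hasDerivAt_sinh t) hs).congr_deriv ?_
  rw [sinhDefect, show (2 - (1 - a)) * t = t + a * t by ring,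
    show (1 - a) * t = t - a * t by ring, sinh_add, sinh_sub, id]
  field_simp
  ring

lemma hasDerivAt_sinh_combination_div_sinh (α β : ℝ) {t : ℝ} (ht : t ≠ 0) :
    HasDerivAt (fun t => (2 * sinh ((1 - α) * t) + sinh ((α + β - 1) * t)
        + sinh ((1 - β + α) * t)) / (2 * sinh t))
      (-(2 * sinhDefect α t + sinhDefect (2 - α - β) t + sinhDefect (β - α) t)
        / (4 * sinh t ^ 2)) t := by
  have hsplit : (fun t => (2 * sinh ((1 - α) * t) + sinh ((α + β - 1) * t)
      + sinh ((1 - β + α) * t)) / (2 * sinh t)) = fun t => sinh ((1 - α) * t) / sinh t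
      + sinh ((α + β - 1) * t) / sinh t / 2 + sinh ((1 - β + α) * t) / sinh t / 2 := by
    funext s
    ring
  rw [hsplit]
  refine (((hasDerivAt_sinh_mul_div_sinh (1 - α) ht).add
    ((hasDerivAt_sinh_mul_div_sinh (α + β - 1) ht).div_const 2)).add
    ((hasDerivAt_sinh_mul_div_sinh (1 - β + α) ht).div_const 2)).congr_deriv ?_
  rw [sub_sub_cancel, show 1 - (α + β - 1) = 2 - α - β by ring,
    show 1 - (1 - β + α) = β - α by ring]
  ring

lemma sinh_combination_nonneg {α β t : ℝ} (hα₀ : 0 ≤ α) (hα₁ : α ≤ 1) (ht : 0 ≤ t) :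
    0 ≤ 2 * sinh ((1 - α) * t) + sinh ((α + β - 1) * t) + sinh ((1 - β + α) * t) := by
  have hsum : sinh ((α + β - 1) * t) + sinh ((1 - β + α) * t)
      = 2 * sinh (α * t) * cosh ((β - 1) * t) := by
    rw [show (α + β - 1) * t = α * t + (β - 1) * t by ring,
      show (1 - β + α) * t = α * t - (β - 1) * t by ring, sinh_add, sinh_sub]
    ring
  have h1 : 0 ≤ sinh ((1 - α) * t) := sinh_nonneg_iff.mpr (by nlinarith)
  rw [add_assoc, hsum]
  positivity

/-- For `0 < α ≤ β ≤ 1`, the function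
`Q(t) = (2 sinh((1−α)t) + sinh((α+β−1)t) + sinh((1−β+α)t))/(2 sinh t)` is nonnegative
and monotonically nonincreasing on `(0, ∞)`. -/
theorem stmt_15 (α β : ℝ) (hα : 0 < α) (hαβ : α ≤ β) (hβ : β ≤ 1) :
    (∀ t ∈ Set.Ioi (0 : ℝ),
        0 ≤ (2 * sinh ((1 - α) * t) + sinh ((α + β - 1) * t) + sinh ((1 - β + α) * t)) /
          (2 * sinh t)) ∧
    AntitoneOn (fun t : ℝ =>
        (2 * sinh ((1 - α) * t) + sinh ((α + β - 1) * t) + sinh ((1 - β + α) * t)) /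
          (2 * sinh t))
      (Set.Ioi 0) := by
  refine ⟨fun t ht => div_nonneg (sinh_combination_nonneg hα.le (hαβ.trans hβ) (le_of_lt ht))
    (mul_pos two_pos (sinh_pos_iff.mpr ht)).le, ?_⟩
  have hderiv (t : ℝ) (ht : t ∈ Ioi 0) := hasDerivAt_sinh_combination_div_sinh α β ht.ne'
  refine antitoneOn_of_hasDerivWithinAt_nonpos (convex_Ioi 0) (f' := fun t =>
      -(2 * sinhDefect α t + sinhDefect (2 - α - β) t + sinhDefect (β - α) t) / (4 * sinh t ^ 2))
    (fun t ht => (hderiv t ht).continuousAt.continuousWithinAt) ?_ ?_ <;> rw [interior_Ioi]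
  · exact fun t ht => (hderiv t ht).hasDerivWithinAt
  · exact fun t ht => div_nonpos_of_nonpos_of_nonneg
      (neg_nonpos.mpr (sinhDefect_combination_nonneg hα hαβ hβ ht)) (by positivity)
end

section
/- Let α and β be real numbers with 0 < α ≤ β ≤ 1. Then for every t ≥ 0, 4(2−α)α sinh((1−α)t) + 2(2−β+α)(β−α) sinh((1−β+α)t) − 2(α+β)(2−α−β) sinh((1−α−β)t) ≥ 0. -/
open Real

/-- For `0 < α ≤ β ≤ 1` and `t ≥ 0`,
`4(2−α)α sinh((1−α)t) + 2(2−β+α)(β−α) sinh((1−β+α)t) − 2(α+β)(2−α−β) sinh((1−α−β)t) ≥ 0`. -/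
theorem stmt_17 (α β : ℝ) (hα : 0 < α) (hαβ : α ≤ β) (hβ : β ≤ 1) (t : ℝ) (ht : 0 ≤ t) :
    0 ≤ 4 * (2 - α) * α * sinh ((1 - α) * t)
      + 2 * (2 - β + α) * (β - α) * sinh ((1 - β + α) * t)
      - 2 * (α + β) * (2 - α - β) * sinh ((1 - α - β) * t) := by
  have h1 : sinh ((1 - α - β) * t) ≤ sinh ((1 - α) * t) :=
    Real.sinh_le_sinh.2 (by nlinarith)
  have h2 : sinh ((1 - α - β) * t) ≤ sinh ((1 - β + α) * t) :=
    Real.sinh_le_sinh.2 (by nlinarith)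
  have hs1 : 0 ≤ sinh ((1 - α) * t) := Real.sinh_nonneg_iff.2 (by nlinarith)
  have hs2 : 0 ≤ sinh ((1 - β + α) * t) := Real.sinh_nonneg_iff.2 (by nlinarith)
  have hcA : (0:ℝ) ≤ 4 * (2 - α) * α := by nlinarith
  have hcB : (0:ℝ) ≤ 2 * (2 - β + α) * (β - α) := by nlinarith
  have hcC : (0:ℝ) ≤ 2 * (α + β) * (2 - α - β) := by nlinarith
  have hcoef : 2 * (α + β) * (2 - α - β) ≤ 4 * (2 - α) * α + 2 * (2 - β + α) * (β - α) := by
    nlinarith [mul_nonneg hα.le (sub_nonneg.2 hαβ)]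
  rcases le_or_gt (sinh ((1 - α - β) * t)) 0 with h3 | h3
  · nlinarith [mul_nonneg hcA hs1, mul_nonneg hcB hs2,
      mul_nonpos_of_nonneg_of_nonpos hcC h3]
  · nlinarith [mul_le_mul_of_nonneg_right hcoef h3.le,
      mul_le_mul_of_nonneg_left h1 hcA, mul_le_mul_of_nonneg_left h2 hcB]
end
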